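/- Let α, β, δ, m > 0 and μ ∈ (4,6]. Then the function g(t) = α t² + β t⁴ − δ t^μ has a unique critical point on (0,∞), which is its strict global maximizer. Assume moreover that sup_{t>0} g(t) > m, and define φ : ℝ → ℝ by φ(s) = (α/2)e^{2s} + (β/4)e^{4s} − (δ/μ)e^{μs} − m·s. Then φ′ has exactly two zeros s⁺ < s⁻; one has φ″(s⁺) > 0 and φ″(s⁻) < 0; φ′(s) < 0 for s < s⁺ and for s > s⁻, while φ′(s) > 0 for s ∈ (s⁺, s⁻). In particular s⁺ is a strict local minimum point of φ and s⁻ is a strict local maximum point of φ. -/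

import Mathlib

open Real Set Filter Topology

private lemma aux_hg (α β δ μ : ℝ) (hμ : 1 ≤ μ) (t : ℝ) :
    HasDerivAt (fun t : ℝ => α * t ^ 2 + β * t ^ 4 - δ * t ^ μ)
      (2 * α * t + 4 * β * t ^ 3 - δ * (μ * t ^ (μ - 1))) t := by
  have h1 := (hasDerivAt_pow 2 t).const_mul α
  have h2 := (hasDerivAt_pow 4 t).const_mul β
  have h3 := (Real.hasDerivAt_rpow_const (x := t) (p := μ) (Or.inr hμ)).const_mul δ
  have := (h1.add h2).sub h3
  refine this.congr_deriv (Eq.symm ?_)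
  norm_num
  ring

private lemma aux_hq (α β δ μ : ℝ) (t : ℝ) (ht : t ≠ 0) :
    HasDerivAt (fun t : ℝ => 2*α*t^(2-μ) + 4*β*t^(4-μ) - δ*μ)
      (2*α*((2-μ)*t^(2-μ-1)) + 4*β*((4-μ)*t^(4-μ-1))) t := by
  have h1 := (Real.hasDerivAt_rpow_const (x := t) (p := 2-μ) (Or.inl ht)).const_mul (2*α)
  have h2 := (Real.hasDerivAt_rpow_const (x := t) (p := 4-μ) (Or.inl ht)).const_mul (4*β)
  have := (h1.add h2).sub_const (δ*μ)
  exact this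

set_option maxHeartbeats 1000000 in
theorem stmt7 (α β δ m μ : ℝ) (hα : 0 < α) (hβ : 0 < β) (hδ : 0 < δ) (hm : 0 < m)
    (hμ : μ ∈ Set.Ioc (4 : ℝ) 6) :
    let g : ℝ → ℝ := fun t => α * t ^ 2 + β * t ^ 4 - δ * t ^ μ
    let φ : ℝ → ℝ := fun s =>
      α / 2 * Real.exp (2 * s) + β / 4 * Real.exp (4 * s) - δ / μ * Real.exp (μ * s) - m * s
    -- unique critical point of g on (0,∞), which is its strict global maximizer
    (∃! T : ℝ, 0 < T ∧ deriv g T = 0) ∧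
    (∀ T : ℝ, 0 < T → deriv g T = 0 → ∀ t : ℝ, 0 < t → t ≠ T → g t < g T) ∧
    -- structure of the fiber map φ under sup_{t>0} g(t) > m
    (m < sSup (g '' Set.Ioi 0) →
      ∃ sp sm : ℝ, sp < sm ∧
        deriv φ sp = 0 ∧ deriv φ sm = 0 ∧
        (∀ s : ℝ, deriv φ s = 0 → s = sp ∨ s = sm) ∧
        0 < iteratedDeriv 2 φ sp ∧ iteratedDeriv 2 φ sm < 0 ∧
        (∀ s : ℝ, s < sp → deriv φ s < 0) ∧
        (∀ s : ℝ, sm < s → deriv φ s < 0) ∧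
        (∀ s : ℝ, sp < s → s < sm → 0 < deriv φ s) ∧
        (∀ᶠ s in nhdsWithin sp {sp}ᶜ, φ sp < φ s) ∧
        (∀ᶠ s in nhdsWithin sm {sm}ᶜ, φ s < φ sm)) := by
  intro g φ
  obtain ⟨hμ4, hμ6⟩ := hμ
  have hμ1 : (1:ℝ) ≤ μ := by linarith
  have hμ0 : (0:ℝ) < μ := by linarith
  set gd : ℝ → ℝ := fun t => 2*α*t + 4*β*t^3 - δ*(μ*t^(μ-1)) with hgddef
  have hgderiv : ∀ t, HasDerivAt g (gd t) t := fun t => aux_hg α β δ μ hμ1 t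
  have hgd' : deriv g = gd := funext fun t => (hgderiv t).deriv
  set q : ℝ → ℝ := fun t => 2*α*t^(2-μ) + 4*β*t^(4-μ) - δ*μ with hqdef
  -- q is strictly antitone on (0,∞)
  have hqanti : StrictAntiOn q (Ioi 0) := by
    apply strictAntiOn_of_deriv_neg (convex_Ioi 0)
    · exact fun t ht => (aux_hq α β δ μ t (ne_of_gt ht)).continuousAt.continuousWithinAt
    · intro t ht
      rw [interior_Ioi] at ht
      rw [(aux_hq α β δ μ t (ne_of_gt ht)).deriv]
      have p1 := Real.rpow_pos_of_pos ht (2-μ-1)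
      have p2 := Real.rpow_pos_of_pos ht (4-μ-1)
      nlinarith [mul_pos hα p1, mul_pos hβ p2]
  -- q is positive at a small point t₀
  set t₀ := min 1 (Real.sqrt (α/(δ*μ))) with ht₀def
  have ht₀pos : 0 < t₀ := lt_min one_pos (Real.sqrt_pos.mpr (by positivity))
  have ht₀le1 : t₀ ≤ 1 := min_le_left _ _
  have hqt₀ : 0 < q t₀ := by
    have h1 : t₀ ^ (-2:ℝ) ≤ t₀ ^ (2-μ) :=
      Real.rpow_le_rpow_of_exponent_ge ht₀pos ht₀le1 (by linarith)
    have h2 : t₀ ^ (-2:ℝ) = (t₀^2)⁻¹ := by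
      rw [show (-2:ℝ) = -((2:ℕ):ℝ) by norm_num, Real.rpow_neg ht₀pos.le, Real.rpow_natCast]
    have h3 : t₀^2 ≤ α/(δ*μ) := by
      have hle : t₀ ≤ Real.sqrt (α/(δ*μ)) := min_le_right _ _
      nlinarith [Real.sq_sqrt (show (0:ℝ) ≤ α/(δ*μ) by positivity), ht₀pos]
    have hsq : 0 < t₀^2 := by positivity
    have h5 : δ*μ*t₀^2 ≤ α := by
      have := (le_div_iff₀ (show (0:ℝ) < δ*μ by positivity)).mp h3
      linarith
    have h6 : δ*μ ≤ α / t₀^2 := (le_div_iff₀ hsq).mpr (by linarith)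
    have h7 : α / t₀^2 ≤ α * t₀^(2-μ) := by
      rw [div_eq_mul_inv, ← h2]
      exact mul_le_mul_of_nonneg_left h1 hα.le
    have h8 : 0 < t₀^(4-μ) := Real.rpow_pos_of_pos ht₀pos _
    have hδμ : 0 < δ*μ := by positivity
    simp only [hqdef]
    nlinarith
  -- q is eventually negative
  have hqtend : Tendsto q atTop (𝓝 (2*α*0 + 4*β*0 - δ*μ)) := by
    have l1 : Tendsto (fun t:ℝ => t ^ (2-μ)) atTop (𝓝 0) := by
      have he : (2-μ) = -(μ-2) := by ring
      simp only [he]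
      exact tendsto_rpow_neg_atTop (by linarith)
    have l2 : Tendsto (fun t:ℝ => t ^ (4-μ)) atTop (𝓝 0) := by
      have he : (4-μ) = -(μ-4) := by ring
      simp only [he]
      exact tendsto_rpow_neg_atTop (by linarith)
    exact ((l1.const_mul (2*α)).add (l2.const_mul (4*β))).sub_const (δ*μ)
  have hqneg : ∀ᶠ t in atTop, q t < 0 :=
    hqtend.eventually_lt_const (by nlinarith)
  obtain ⟨t₁, hqt₁, ht₀t₁⟩ := (hqneg.and (eventually_ge_atTop t₀)).exists
  -- the critical point T
  have hqcont : ContinuousOn q (Icc t₀ t₁) := fun t ht =>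
    (aux_hq α β δ μ t (ne_of_gt (lt_of_lt_of_le ht₀pos ht.1))).continuousAt.continuousWithinAt
  obtain ⟨T, hTmem, hqT⟩ := intermediate_value_Icc' ht₀t₁ hqcont ⟨hqt₁.le, hqt₀.le⟩
  have hT : 0 < T := lt_of_lt_of_le ht₀pos hTmem.1
  -- factorization
  have hfac : ∀ t : ℝ, 0 < t → gd t = t^(μ-1) * q t := by
    intro t ht
    have e1 : t^(μ-1) * t^(2-μ) = t := by
      rw [← Real.rpow_add ht]
      norm_num
    have e2 : t^(μ-1) * t^(4-μ) = t^(3:ℕ) := by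
      rw [← Real.rpow_add ht, ← Real.rpow_natCast t 3]
      norm_num
    simp only [hgddef, hqdef]
    push_cast at e2
    linear_combination (-2*α)*e1 + (-4*β)*e2
  have hgdT : gd T = 0 := by rw [hfac T hT, hqT, mul_zero]
  have hgdpos : ∀ t : ℝ, 0 < t → t < T → 0 < gd t := by
    intro t ht htT
    rw [hfac t ht]
    have : q T < q t := hqanti (mem_Ioi.mpr ht) (mem_Ioi.mpr hT) htT
    rw [hqT] at this
    exact mul_pos (Real.rpow_pos_of_pos ht _) this
  have hgdneg : ∀ t : ℝ, T < t → gd t < 0 := by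
    intro t htT
    have ht : 0 < t := hT.trans htT
    rw [hfac t ht]
    have : q t < q T := hqanti (mem_Ioi.mpr hT) (mem_Ioi.mpr ht) htT
    rw [hqT] at this
    exact mul_neg_of_pos_of_neg (Real.rpow_pos_of_pos ht _) this
  have hgcont : Continuous g := continuous_iff_continuousAt.mpr fun t => (hgderiv t).continuousAt
  have hmono : StrictMonoOn g (Ioc 0 T) := by
    apply strictMonoOn_of_deriv_pos (convex_Ioc 0 T) hgcont.continuousOn
    intro t ht
    rw [interior_Ioc] at ht
    rw [hgd']
    exact hgdpos t ht.1 ht.2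
  have hanti : StrictAntiOn g (Ici T) := by
    apply strictAntiOn_of_deriv_neg (convex_Ici T) hgcont.continuousOn
    intro t ht
    rw [interior_Ici] at ht
    rw [hgd']
    exact hgdneg t ht
  have huniq : ∀ T' : ℝ, 0 < T' → deriv g T' = 0 → T' = T := by
    intro T' hT' h
    rw [hgd', hfac T' hT'] at h
    have hqT' : q T' = 0 := by
      rcases mul_eq_zero.mp h with h|h
      · exact absurd h (ne_of_gt (Real.rpow_pos_of_pos hT' _))
      · exact h
    exact hqanti.injOn (mem_Ioi.mpr hT') (mem_Ioi.mpr hT) (hqT'.trans hqT.symm)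
  have hmax : ∀ t : ℝ, 0 < t → t ≠ T → g t < g T := by
    intro t ht htne
    rcases lt_trichotomy t T with h|h|h
    · exact hmono ⟨ht, h.le⟩ ⟨hT, le_refl T⟩ h
    · exact absurd h htne
    · exact hanti (self_mem_Ici) h.le h
  refine ⟨⟨T, ⟨hT, by rw [hgd']; exact hgdT⟩, fun T' h => huniq T' h.1 h.2⟩, ?_, ?_⟩
  · intro T' hT' hd t ht htne
    have hTT : T' = T := huniq T' hT' hd
    subst hTT
    exact hmax t ht htne
  -- part 3
  intro hsup
  have hgT : m < g T := by
    refine lt_of_lt_of_le hsup (csSup_le ⟨g T, ⟨T, mem_Ioi.mpr hT, rfl⟩⟩ ?_)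
    rintro x ⟨t, ht, rfl⟩
    rcases eq_or_ne t T with rfl|hne
    · exact le_refl _
    · exact (hmax t (mem_Ioi.mp ht) hne).le
  -- small root
  set t₂ := min T (min 1 (Real.sqrt (m/(α+β+1)))) with ht₂def
  have ht₂pos : 0 < t₂ := lt_min hT (lt_min one_pos (Real.sqrt_pos.mpr (by positivity)))
  have ht₂1 : t₂ ≤ 1 := le_trans (min_le_right _ _) (min_le_left _ _)
  have ht₂T : t₂ ≤ T := min_le_left _ _
  have hgt₂ : g t₂ < m := by
    have h1 : t₂^2 ≤ m/(α+β+1) := by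
      have hle : t₂ ≤ Real.sqrt (m/(α+β+1)) := le_trans (min_le_right _ _) (min_le_right _ _)
      nlinarith [Real.sq_sqrt (show (0:ℝ) ≤ m/(α+β+1) by positivity), ht₂pos]
    have h2a : t₂^2 ≤ 1 := by nlinarith
    have h2 : t₂^4 ≤ t₂^2 := by
      nlinarith [mul_nonneg (sq_nonneg t₂) (sub_nonneg.mpr h2a)]
    have h3 : 0 < t₂^μ := Real.rpow_pos_of_pos ht₂pos μ
    have h4 : (α+β) * (m/(α+β+1)) < m := by
      rw [mul_div_assoc', div_lt_iff₀ (show (0:ℝ) < α+β+1 by positivity)]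
      nlinarith
    have h5 : α*t₂^2 ≤ α*(m/(α+β+1)) := mul_le_mul_of_nonneg_left h1 hα.le
    have h6 : β*t₂^4 ≤ β*(m/(α+β+1)) := mul_le_mul_of_nonneg_left (h2.trans h1) hβ.le
    show α * t₂ ^ 2 + β * t₂ ^ 4 - δ * t₂ ^ μ < m
    nlinarith [mul_pos hδ h3]
  obtain ⟨tp, htpmem, hgtp⟩ :=
    intermediate_value_Icc ht₂T hgcont.continuousOn ⟨hgt₂.le, hgT.le⟩
  have htppos : 0 < tp := lt_of_lt_of_le ht₂pos htpmem.1
  have htpT : tp < T := lt_of_le_of_ne htpmem.2 (by rintro rfl; rw [hgtp] at hgT; exact absurd hgT (lt_irrefl m))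
  -- large root
  have hgbot : Tendsto g atTop atBot := by
    have l1 : Tendsto (fun t:ℝ => t ^ (2-μ)) atTop (𝓝 0) := by
      have he : (2-μ) = -(μ-2) := by ring
      simp only [he]
      exact tendsto_rpow_neg_atTop (by linarith)
    have l2 : Tendsto (fun t:ℝ => t ^ (4-μ)) atTop (𝓝 0) := by
      have he : (4-μ) = -(μ-4) := by ring
      simp only [he]
      exact tendsto_rpow_neg_atTop (by linarith)
    have linner : Tendsto (fun t:ℝ => α * t^(2-μ) + β*t^(4-μ) - δ) atTop (𝓝 (α*0 + β*0 - δ)) :=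
      ((l1.const_mul α).add (l2.const_mul β)).sub_const δ
    have l3 : Tendsto (fun t:ℝ => t^μ * (α * t^(2-μ) + β*t^(4-μ) - δ)) atTop atBot :=
      Tendsto.atTop_mul_neg (by nlinarith) (tendsto_rpow_atTop hμ0) linner
    apply l3.congr'
    filter_upwards [eventually_gt_atTop (0:ℝ)] with t ht
    have e1 : t^μ * t^(2-μ) = t^(2:ℕ) := by
      rw [← Real.rpow_add ht, ← Real.rpow_natCast t 2]
      norm_num
    have e2 : t^μ * t^(4-μ) = t^(4:ℕ) := by
      rw [← Real.rpow_add ht, ← Real.rpow_natCast t 4]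
      norm_num
    show t^μ * (α * t^(2-μ) + β*t^(4-μ) - δ) = α * t ^ 2 + β * t ^ 4 - δ * t ^ μ
    push_cast at e1 e2
    linear_combination α*e1 + β*e2
  obtain ⟨t₃, hgt₃, hTt₃⟩ :=
    ((hgbot.eventually (eventually_lt_atBot m)).and (eventually_gt_atTop T)).exists
  obtain ⟨tm, htmmem, hgtm⟩ :=
    intermediate_value_Icc' hTt₃.le hgcont.continuousOn ⟨hgt₃.le, hgT.le⟩
  have hTtm : T < tm := lt_of_le_of_ne htmmem.1 (by rintro rfl; rw [hgtm] at hgT; exact absurd hgT (lt_irrefl m))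
  have htmpos : 0 < tm := hT.trans hTtm
  -- define sp, sm
  set sp := Real.log tp with hspdef
  set sm := Real.log tm with hsmdef
  have hexp_sp : Real.exp sp = tp := Real.exp_log htppos
  have hexp_sm : Real.exp sm = tm := Real.exp_log htmpos
  have hspsm : sp < sm := Real.log_lt_log htppos (htpT.trans hTtm)
  -- derivative of φ
  have hφd : ∀ s, HasDerivAt φ (g (Real.exp s) - m) s := by
    intro s
    have h1 : HasDerivAt (fun s : ℝ => Real.exp (2*s)) (Real.exp (2*s) * (2*1)) s :=
      ((hasDerivAt_id s).const_mul 2).exp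
    have h2 : HasDerivAt (fun s : ℝ => Real.exp (4*s)) (Real.exp (4*s) * (4*1)) s :=
      ((hasDerivAt_id s).const_mul 4).exp
    have h3 : HasDerivAt (fun s : ℝ => Real.exp (μ*s)) (Real.exp (μ*s) * (μ*1)) s :=
      ((hasDerivAt_id s).const_mul μ).exp
    have h4 : HasDerivAt (fun s : ℝ => m*s) (m*1) s := (hasDerivAt_id s).const_mul m
    have h := (((h1.const_mul (α/2)).add (h2.const_mul (β/4))).sub (h3.const_mul (δ/μ))).sub h4
    refine h.congr_deriv (Eq.symm ?_)
    have e2 : Real.exp s ^ (2:ℕ) = Real.exp (2*s) := by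
      rw [← Real.exp_nat_mul]; norm_num
    have e4 : Real.exp s ^ (4:ℕ) = Real.exp (4*s) := by
      rw [← Real.exp_nat_mul]; norm_num
    have eμ : Real.exp s ^ μ = Real.exp (μ*s) := by
      rw [← Real.exp_mul, mul_comm]
    show α * Real.exp s ^ 2 + β * Real.exp s ^ 4 - δ * Real.exp s ^ μ - m = _
    rw [e2, e4, eμ]
    field_simp
  have hφd' : deriv φ = fun s => g (Real.exp s) - m := funext fun s => (hφd s).deriv
  -- sign lemmas
  have sgn1 : ∀ s : ℝ, s < sp → deriv φ s < 0 := by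
    intro s hs
    rw [hφd']
    have h1 : Real.exp s < tp := by rw [← hexp_sp]; exact Real.exp_lt_exp.mpr hs
    have h2 : g (Real.exp s) < g tp :=
      hmono ⟨Real.exp_pos s, (h1.trans htpT).le⟩ ⟨htppos, htpT.le⟩ h1
    rw [hgtp] at h2
    simpa using sub_neg.mpr h2
  have sgn2 : ∀ s : ℝ, sm < s → deriv φ s < 0 := by
    intro s hs
    rw [hφd']
    have h1 : tm < Real.exp s := by rw [← hexp_sm]; exact Real.exp_lt_exp.mpr hs
    have h2 : g (Real.exp s) < g tm :=
      hanti (mem_Ici.mpr hTtm.le) (mem_Ici.mpr (hTtm.trans h1).le) h1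
    rw [hgtm] at h2
    simpa using sub_neg.mpr h2
  have sgn3 : ∀ s : ℝ, sp < s → s < sm → 0 < deriv φ s := by
    intro s hs1 hs2
    rw [hφd']
    have h1 : tp < Real.exp s := by rw [← hexp_sp]; exact Real.exp_lt_exp.mpr hs1
    have h2 : Real.exp s < tm := by rw [← hexp_sm]; exact Real.exp_lt_exp.mpr hs2
    have h3 : m < g (Real.exp s) := by
      rcases le_or_gt (Real.exp s) T with h|h
      · have := hmono ⟨htppos, htpT.le⟩ ⟨Real.exp_pos s, h⟩ h1
        rw [hgtp] at this; exact this
      · have := hanti (mem_Ici.mpr h.le) (mem_Ici.mpr hTtm.le) h2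
        rw [hgtm] at this; exact this
    simpa using sub_pos.mpr h3
  have hzsp : deriv φ sp = 0 := by rw [hφd']; simp [hexp_sp, hgtp]
  have hzsm : deriv φ sm = 0 := by rw [hφd']; simp [hexp_sm, hgtm]
  -- second derivative
  have hφd2 : ∀ s, HasDerivAt (deriv φ) (Real.exp s * gd (Real.exp s)) s := by
    intro s
    rw [hφd']
    have h := ((hgderiv (Real.exp s)).comp s (Real.hasDerivAt_exp s)).sub_const m
    simpa [Function.comp, mul_comm] using h
  have hiter : ∀ s, iteratedDeriv 2 φ s = Real.exp s * gd (Real.exp s) := by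
    intro s
    rw [iteratedDeriv_succ, iteratedDeriv_one]
    exact (hφd2 s).deriv
  -- φ pieces
  have hφcont : Continuous φ := continuous_iff_continuousAt.mpr fun s => (hφd s).continuousAt
  have hφanti1 : StrictAntiOn φ (Iic sp) := by
    apply strictAntiOn_of_deriv_neg (convex_Iic sp) hφcont.continuousOn
    intro s hs
    rw [interior_Iic] at hs
    exact sgn1 s hs
  have hφmono : StrictMonoOn φ (Icc sp sm) := by
    apply strictMonoOn_of_deriv_pos (convex_Icc sp sm) hφcont.continuousOn
    intro s hs
    rw [interior_Icc] at hs
    exact sgn3 s hs.1 hs.2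
  have hφanti2 : StrictAntiOn φ (Ici sm) := by
    apply strictAntiOn_of_deriv_neg (convex_Ici sm) hφcont.continuousOn
    intro s hs
    rw [interior_Ici] at hs
    exact sgn2 s hs
  refine ⟨sp, sm, hspsm, hzsp, hzsm, ?_, ?_, ?_, sgn1, sgn2, sgn3, ?_, ?_⟩
  · -- uniqueness of zeros
    intro s hs
    rcases lt_trichotomy s sp with h|h|h
    · exact absurd hs (ne_of_lt (sgn1 s h))
    · exact Or.inl h
    · rcases lt_trichotomy s sm with h'|h'|h'
      · exact absurd hs (ne_of_gt (sgn3 s h h'))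
      · exact Or.inr h'
      · exact absurd hs (ne_of_lt (sgn2 s h'))
  · rw [hiter, hexp_sp]
    exact mul_pos htppos (hgdpos tp htppos htpT)
  · rw [hiter, hexp_sm]
    exact mul_neg_of_pos_of_neg htmpos (hgdneg tm hTtm)
  · rw [eventually_nhdsWithin_iff]
    filter_upwards [Ioo_mem_nhds (show sp-1 < sp by linarith) hspsm] with s hs hne
    have hne' : s ≠ sp := hne
    rcases lt_or_gt_of_ne hne' with h|h
    · exact hφanti1 (mem_Iic.mpr h.le) (mem_Iic.mpr (le_refl sp)) h
    · exact hφmono (left_mem_Icc.mpr hspsm.le) ⟨h.le, hs.2.le⟩ h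
  · rw [eventually_nhdsWithin_iff]
    filter_upwards [Ioo_mem_nhds hspsm (show sm < sm+1 by linarith)] with s hs hne
    have hne' : s ≠ sm := hne
    rcases lt_or_gt_of_ne hne' with h|h
    · exact hφmono ⟨hs.1.le, h.le⟩ (right_mem_Icc.mpr hspsm.le) h
    · exact hφanti2 (mem_Ici.mpr (le_refl sm)) (mem_Ici.mpr h.le) h
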